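/- Let L be a C^{k,α} submanifold of a smooth Riemannian manifold M with k ≥ 1, 0 ≤ α ≤ 1. Then the following are equivalent: (1) L is C^{k+1,α}; (2) the tangent bundle TL, viewed as a subbundle of TM restricted to L, is C^{k,α}; (3) the normal bundle T^⊥L is C^{k,α}; (4) the second fundamental form of L is C^{k−1,α}. -/

import Mathlib

open scoped RealInnerProductSpace

noncomputable section

/-- The ambient Euclidean space `ℝⁿ = ℝˡ × ℝ^{n-l}` (with the ℓ² product inner product). -/
abbrev Amb (l m : ℕ) : Type :=
  WithLp 2 (EuclideanSpace ℝ (Fin l) × EuclideanSpace ℝ (Fin m))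

def toAmb {l m : ℕ} (x : EuclideanSpace ℝ (Fin l)) (y : EuclideanSpace ℝ (Fin m)) :
    Amb l m :=
  (WithLp.equiv 2 (EuclideanSpace ℝ (Fin l) × EuclideanSpace ℝ (Fin m))).symm (x, y)

/-- The tangent space of the graph of `F` at the point `(x, F x)`. -/
def graphTangent {l m : ℕ} (F : EuclideanSpace ℝ (Fin l) → EuclideanSpace ℝ (Fin m))
    (x : EuclideanSpace ℝ (Fin l)) : Submodule ℝ (Amb l m) :=
  LinearMap.range
    ((WithLp.linearEquiv 2 ℝ
        (EuclideanSpace ℝ (Fin l) × EuclideanSpace ℝ (Fin m))).symm.toLinearMap.comp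
      (LinearMap.prod (LinearMap.id) ((fderiv ℝ F x).toLinearMap)))

/-- The second fundamental form of the graph of `F` at `(x, F x)`, evaluated on the
tangent vectors with `ℝˡ`-coordinates `v` and `w`. -/
def secondFF {l m : ℕ} (F : EuclideanSpace ℝ (Fin l) → EuclideanSpace ℝ (Fin m))
    (x v w : EuclideanSpace ℝ (Fin l)) : Amb l m :=
  (Submodule.orthogonalProjection ((graphTangent F x)ᗮ)
    (toAmb 0 (fderiv ℝ (fderiv ℝ F) x v w)) : Amb l m)

/-- The orthogonal projection of the ambient space onto the tangent space of the graph;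
this continuous-linear-map-valued function represents the tangent bundle `TL ⊂ TM`. -/
def tangProj {l m : ℕ} (F : EuclideanSpace ℝ (Fin l) → EuclideanSpace ℝ (Fin m))
    (x : EuclideanSpace ℝ (Fin l)) : Amb l m →L[ℝ] Amb l m :=
  (graphTangent F x).subtypeL.comp (Submodule.orthogonalProjection (graphTangent F x))

/-- The orthogonal projection onto the normal space of the graph, representing the
normal bundle `T^⊥L ⊂ TM`. -/
def normProj {l m : ℕ} (F : EuclideanSpace ℝ (Fin l) → EuclideanSpace ℝ (Fin m))
    (x : EuclideanSpace ℝ (Fin l)) : Amb l m →L[ℝ] Amb l m :=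
  ((graphTangent F x)ᗮ).subtypeL.comp (Submodule.orthogonalProjection ((graphTangent F x)ᗮ))

/-- `f` is of class `C^{k,α}` on `s`. -/
def HolderRegOn (k : ℕ) (α : NNReal) {E F : Type*} [NormedAddCommGroup E] [NormedSpace ℝ E]
    [NormedAddCommGroup F] [NormedSpace ℝ F] (f : E → F) (s : Set E) : Prop :=
  ContDiffOn ℝ k f s ∧
    ∀ x ∈ s, ∃ u ∈ nhdsWithin x s, ∃ C : NNReal,
      HolderOnWith C α (iteratedFDerivWithin ℝ k f s) u
/-! ### Generic Hölder-regularity infrastructure -/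

open Set

section HolderInfra

variable {E : Type} [NormedAddCommGroup E] [NormedSpace ℝ E]

theorem edist_iterated_zero {F : Type} [NormedAddCommGroup F] [NormedSpace ℝ F]
    (f : E → F) (s : Set E) (x y : E) :
    edist (iteratedFDerivWithin ℝ 0 f s x) (iteratedFDerivWithin ℝ 0 f s y)
      = edist (f x) (f y) := by
  rw [iteratedFDerivWithin_zero_eq_comp]
  exact (LinearIsometryEquiv.isometry _).edist_eq _ _

theorem holder_zero_iff {F : Type} [NormedAddCommGroup F] [NormedSpace ℝ F]
    {f : E → F} {s u : Set E} {C α : NNReal} :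
    HolderOnWith C α (iteratedFDerivWithin ℝ 0 f s) u ↔ HolderOnWith C α f u := by
  constructor <;> intro h x hx y hy
  · have := h x hx y hy
    rwa [edist_iterated_zero] at this
  · rw [edist_iterated_zero]
    exact h x hx y hy

theorem edist_iterated_succ {F : Type} [NormedAddCommGroup F] [NormedSpace ℝ F]
    {f : E → F} {s : Set E} {n : ℕ} (hs : UniqueDiffOn ℝ s) {x y : E}
    (hx : x ∈ s) (hy : y ∈ s) :
    edist (iteratedFDerivWithin ℝ (n + 1) f s x) (iteratedFDerivWithin ℝ (n + 1) f s y)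
      = edist (iteratedFDerivWithin ℝ n (fderivWithin ℝ f s) s x)
          (iteratedFDerivWithin ℝ n (fderivWithin ℝ f s) s y) := by
  rw [iteratedFDerivWithin_succ_eq_comp_right hs hx,
    iteratedFDerivWithin_succ_eq_comp_right hs hy]
  exact (LinearIsometryEquiv.isometry _).edist_eq _ _

theorem natCast_ne_top (k : ℕ) : (k : WithTop ℕ∞) ≠ ⊤ := WithTop.natCast_ne_top k

/-- The key inductive characterization of `C^{k+1,α}` on an open set. -/
theorem holderRegOn_succ_iff {F : Type} [NormedAddCommGroup F] [NormedSpace ℝ F]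
    {k : ℕ} {α : NNReal} {f : E → F} {s : Set E} (hs : IsOpen s) :
    HolderRegOn (k + 1) α f s ↔
      DifferentiableOn ℝ f s ∧ HolderRegOn k α (fderiv ℝ f) s := by
  have hcast : ((k + 1 : ℕ) : WithTop ℕ∞) = (k : WithTop ℕ∞) + 1 := by norm_cast
  have hcd : ContDiffOn ℝ (k + 1 : ℕ) f s ↔
      DifferentiableOn ℝ f s ∧ ContDiffOn ℝ k (fderiv ℝ f) s := by
    rw [hcast, contDiffOn_succ_iff_fderiv_of_isOpen hs]
    exact ⟨fun h => ⟨h.1, h.2.2⟩, fun h => ⟨h.1, fun hk => absurd hk (natCast_ne_top k), h.2⟩⟩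
  have heq : ∀ a ∈ s, iteratedFDerivWithin ℝ k (fderiv ℝ f) s a
      = iteratedFDerivWithin ℝ k (fderivWithin ℝ f s) s a := fun a ha =>
    iteratedFDerivWithin_congr (fun y hy => (fderivWithin_of_isOpen hs hy).symm) ha k
  constructor
  · rintro ⟨hcd', hH⟩
    have h2 := hcd.mp hcd'
    refine ⟨h2.1, h2.2, ?_⟩
    intro x hx
    obtain ⟨u, hu, C, hC⟩ := hH x hx
    refine ⟨u ∩ s, Filter.inter_mem hu self_mem_nhdsWithin, C, ?_⟩
    intro a ha b hb
    rw [heq a ha.2, heq b hb.2, ← edist_iterated_succ hs.uniqueDiffOn ha.2 hb.2]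
    exact hC a ha.1 b hb.1
  · rintro ⟨hdiff, hcd', hH⟩
    refine ⟨hcd.mpr ⟨hdiff, hcd'⟩, ?_⟩
    intro x hx
    obtain ⟨u, hu, C, hC⟩ := hH x hx
    refine ⟨u ∩ s, Filter.inter_mem hu self_mem_nhdsWithin, C, ?_⟩
    intro a ha b hb
    rw [edist_iterated_succ hs.uniqueDiffOn ha.2 hb.2, ← heq a ha.2, ← heq b hb.2]
    exact hC a ha.1 b hb.1

theorem HolderRegOn.congr' {F : Type} [NormedAddCommGroup F] [NormedSpace ℝ F]
    {k : ℕ} {α : NNReal} {f g : E → F} {s : Set E} (h : HolderRegOn k α f s)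
    (hfg : Set.EqOn f g s) : HolderRegOn k α g s := by
  refine ⟨h.1.congr fun x hx => (hfg hx).symm, ?_⟩
  intro x hx
  obtain ⟨u, hu, C, hC⟩ := h.2 x hx
  refine ⟨u ∩ s, Filter.inter_mem hu self_mem_nhdsWithin, C, ?_⟩
  intro a ha b hb
  rw [iteratedFDerivWithin_congr hfg.symm ha.2, iteratedFDerivWithin_congr hfg.symm hb.2]
  exact hC a ha.1 b hb.1

theorem LipschitzOnWith.holderOnWith_of_small {F : Type} [NormedAddCommGroup F]
    [NormedSpace ℝ F] {f : E → F} {u : Set E} {K : NNReal} {α : NNReal} (hα : α ≤ 1)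
    (hL : LipschitzOnWith K f u) (hd : ∀ a ∈ u, ∀ b ∈ u, edist a b ≤ 1) :
    HolderOnWith K α f u := by
  intro a ha b hb
  refine (hL ha hb).trans (mul_le_mul_right ?_ _)
  calc edist a b = edist a b ^ (1 : ℝ) := by rw [ENNReal.rpow_one]
    _ ≤ edist a b ^ (α : ℝ) :=
      ENNReal.rpow_le_rpow_of_exponent_ge (hd a ha b hb) (by exact_mod_cast hα)

/-- From `ContDiffAt 1` we get a small neighborhood (within `s`) on which `f`
is `α`-Hölder, for any `α ≤ 1`. -/
theorem contDiffAt_localHolder {F : Type} [NormedAddCommGroup F] [NormedSpace ℝ F]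
    {f : E → F} {s : Set E} {x : E} {α : NNReal} (hα : α ≤ 1)
    (h : ContDiffAt ℝ 1 f x) :
    ∃ u ∈ nhdsWithin x s, ∃ C : NNReal, HolderOnWith C α f u := by
  obtain ⟨K, t, ht, hK⟩ := h.exists_lipschitzOnWith
  refine ⟨(t ∩ EMetric.ball x (1/2)) ∩ s,
    Filter.inter_mem (mem_nhdsWithin_of_mem_nhds
      (Filter.inter_mem ht (EMetric.ball_mem_nhds x (by norm_num)))) self_mem_nhdsWithin,
    K, ?_⟩
  refine (hK.mono fun a ha => ha.1.1).holderOnWith_of_small hα ?_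
  intro a ha b hb
  calc edist a b ≤ edist a x + edist x b := edist_triangle _ _ _
    _ ≤ 1/2 + 1/2 := by
        refine add_le_add ha.1.2.le ?_
        rw [edist_comm]
        exact hb.1.2.le
    _ = 1 := ENNReal.add_halves 1

theorem HolderRegOn.of_succ_aux {α : NNReal} {s : Set E} (hs : IsOpen s) (hα : α ≤ 1) :
    ∀ (k : ℕ) {F : Type} [NormedAddCommGroup F] [NormedSpace ℝ F] (f : E → F),
      HolderRegOn (k + 1) α f s → HolderRegOn k α f s := by
  intro k
  induction k with
  | zero =>
    intro F _ _ f h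
    refine ⟨h.1.of_le (by exact_mod_cast Nat.zero_le 1), ?_⟩
    intro x hx
    obtain ⟨u, hu, C, hC⟩ :=
      contDiffAt_localHolder (s := s) hα
        ((h.1.contDiffAt (hs.mem_nhds hx)).of_le (by exact_mod_cast Nat.le_refl 1))
    exact ⟨u, hu, C, holder_zero_iff.mpr hC⟩
  | succ n ih =>
    intro F _ _ f h
    rw [holderRegOn_succ_iff hs] at h ⊢
    exact ⟨h.1, ih _ h.2⟩

theorem HolderRegOn.mono_order {F : Type} [NormedAddCommGroup F] [NormedSpace ℝ F]
    {k j : ℕ} {α : NNReal} {f : E → F} {s : Set E} (hs : IsOpen s) (hα : α ≤ 1)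
    (h : HolderRegOn k α f s) (hjk : j ≤ k) : HolderRegOn j α f s := by
  obtain ⟨d, rfl⟩ := le_iff_exists_add.mp hjk
  induction d with
  | zero => exact h
  | succ n ih => exact ih (HolderRegOn.of_succ_aux hs hα (j + n) f h) (by omega)

end HolderInfra
section HolderInfra2

variable {E : Type} [NormedAddCommGroup E] [NormedSpace ℝ E]
  {F : Type} [NormedAddCommGroup F] [NormedSpace ℝ F]
  {G : Type} [NormedAddCommGroup G] [NormedSpace ℝ G]
  {s : Set E} {k : ℕ} {α : NNReal}

/-- Post-composition with a fixed continuous linear map preserves `C^{k,α}`. -/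
theorem HolderRegOn.clm_comp_left (hs : IsOpen s) {f : E → F} (g : F →L[ℝ] G)
    (h : HolderRegOn k α f s) : HolderRegOn k α (fun x => g (f x)) s := by
  refine ⟨g.contDiff.comp_contDiffOn h.1, ?_⟩
  intro x hx
  obtain ⟨u, hu, C, hC⟩ := h.2 x hx
  set L := ContinuousLinearMap.compContinuousMultilinearMapL ℝ
    (fun _ : Fin k => E) F G g with hL
  refine ⟨u ∩ s, Filter.inter_mem hu self_mem_nhdsWithin, ‖L‖₊ * C, ?_⟩
  intro a ha b hb
  have hfun : (fun x => g (f x)) = (⇑g ∘ f) := rfl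
  rw [hfun, g.iteratedFDerivWithin_comp_left (h.1 a ha.2) hs.uniqueDiffOn ha.2 le_rfl,
    g.iteratedFDerivWithin_comp_left (h.1 b hb.2) hs.uniqueDiffOn hb.2 le_rfl]
  have e1 : g.compContinuousMultilinearMap (iteratedFDerivWithin ℝ k f s a) =
      L (iteratedFDerivWithin ℝ k f s a) := rfl
  have e2 : g.compContinuousMultilinearMap (iteratedFDerivWithin ℝ k f s b) =
      L (iteratedFDerivWithin ℝ k f s b) := rfl
  rw [e1, e2]
  calc edist (L (iteratedFDerivWithin ℝ k f s a)) (L (iteratedFDerivWithin ℝ k f s b))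
      ≤ ↑‖L‖₊ * edist (iteratedFDerivWithin ℝ k f s a) (iteratedFDerivWithin ℝ k f s b) :=
        L.lipschitz _ _
    _ ≤ ↑‖L‖₊ * (↑C * edist a b ^ (α : ℝ)) := mul_le_mul_right (hC a ha.1 b hb.1) _
    _ = ↑(‖L‖₊ * C) * edist a b ^ (α : ℝ) := by rw [ENNReal.coe_mul, mul_assoc]

theorem HolderOnWith.prodMk' {u : Set E} {C₁ C₂ : NNReal} {f : E → F} {g : E → G}
    (h1 : HolderOnWith C₁ α f u) (h2 : HolderOnWith C₂ α g u) :
    HolderOnWith (C₁ + C₂) α (fun x => (f x, g x)) u := by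
  intro a ha b hb
  rw [Prod.edist_eq]
  refine sup_le ((h1 a ha b hb).trans ?_) ((h2 a ha b hb).trans ?_) <;>
    exact mul_le_mul_left (by exact_mod_cast ENNReal.coe_le_coe.mpr (by simp)) _

/-- Pairing preserves `C^{k,α}`. -/
theorem HolderRegOn.prodMk {α : NNReal} {s : Set E} (hs : IsOpen s) :
    ∀ (k : ℕ) {F G : Type} [NormedAddCommGroup F] [NormedSpace ℝ F]
      [NormedAddCommGroup G] [NormedSpace ℝ G] {f : E → F} {g : E → G},
      HolderRegOn k α f s → HolderRegOn k α g s →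
      HolderRegOn k α (fun x => (f x, g x)) s := by
  intro k
  induction k with
  | zero =>
    intro F G _ _ _ _ f g hf hg
    refine ⟨hf.1.prodMk hg.1, ?_⟩
    intro x hx
    obtain ⟨u1, hu1, C1, hC1⟩ := hf.2 x hx
    obtain ⟨u2, hu2, C2, hC2⟩ := hg.2 x hx
    refine ⟨u1 ∩ u2, Filter.inter_mem hu1 hu2, C1 + C2,
      holder_zero_iff.mpr
        (((holder_zero_iff.mp hC1).mono Set.inter_subset_left).prodMk'
          ((holder_zero_iff.mp hC2).mono Set.inter_subset_right))⟩
  | succ n ih =>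
    intro F G _ _ _ _ f g hf hg
    rw [holderRegOn_succ_iff hs] at hf hg ⊢
    refine ⟨hf.1.prodMk hg.1, ?_⟩
    have hpair := ih hf.2 hg.2
    have hmain := HolderRegOn.clm_comp_left hs
      ((ContinuousLinearMap.prodₗᵢ (E := E) (F := F) (G := G) (𝕜 := ℝ)
        ℝ).toContinuousLinearEquiv.toContinuousLinearMap) hpair
    refine hmain.congr' fun x hx => ?_
    have hdx : DifferentiableAt ℝ f x := (hf.1 x hx).differentiableAt (hs.mem_nhds hx)
    have hdy : DifferentiableAt ℝ g x := (hg.1 x hx).differentiableAt (hs.mem_nhds hx)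
    exact (hdx.fderiv_prodMk hdy).symm

theorem holderRegOn_const (hs : IsOpen s) {c : F} : HolderRegOn k α (fun _ : E => c) s := by
  refine ⟨contDiffOn_const, fun x hx => ⟨s, self_mem_nhdsWithin, 1, ?_⟩⟩
  intro a ha b hb
  have : iteratedFDerivWithin ℝ k (fun _ : E => c) s a
      = iteratedFDerivWithin ℝ k (fun _ : E => c) s b := by
    cases k with
    | zero =>
      ext m
      simp [iteratedFDerivWithin_zero_apply]
    | succ j =>
      rw [iteratedFDerivWithin_const_of_ne (Nat.succ_ne_zero j) c s]
      rfl
  rw [this, edist_self]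
  exact zero_le

/-- Addition preserves `C^{k,α}`. -/
theorem HolderRegOn.add' (hs : IsOpen s) {f g : E → F} (hf : HolderRegOn k α f s)
    (hg : HolderRegOn k α g s) : HolderRegOn k α (fun x => f x + g x) s := by
  have := HolderRegOn.clm_comp_left hs
    (ContinuousLinearMap.fst ℝ F F + ContinuousLinearMap.snd ℝ F F)
    (HolderRegOn.prodMk hs k hf hg)
  exact this.congr' fun x hx => by simp

/-- Finite sums preserve `C^{k,α}`. -/
theorem holderRegOn_finset_sum {ι : Type*} (hs : IsOpen s) (t : Finset ι) (g : ι → E → F)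
    (h : ∀ i ∈ t, HolderRegOn k α (g i) s) :
    HolderRegOn k α (fun x => ∑ i ∈ t, g i x) s := by
  classical
  induction t using Finset.induction_on with
  | empty => exact (holderRegOn_const hs (c := 0)).congr' fun x hx => by simp
  | insert _ _ hnotmem ih =>
    rename_i a t'
    refine (HolderRegOn.add' hs (h a (Finset.mem_insert_self a t'))
      (ih fun i hi => h i (Finset.mem_insert_of_mem hi))).congr' fun x hx => by
        rw [Finset.sum_insert hnotmem]

/-- Composition with a map that is smooth near the image preserves `C^{k,α}`. -/
theorem HolderRegOn.comp_smooth {α : NNReal} {s : Set E} (hs : IsOpen s) (hα : α ≤ 1) :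
    ∀ (k : ℕ) {F G : Type} [NormedAddCommGroup F] [NormedSpace ℝ F]
      [NormedAddCommGroup G] [NormedSpace ℝ G] (f : E → F) (g : F → G),
      (∀ x ∈ s, ContDiffAt ℝ (k + 1 : ℕ) g (f x)) → HolderRegOn k α f s →
      HolderRegOn k α (fun x => g (f x)) s := by
  intro k
  induction k with
  | zero =>
    intro F G _ _ _ _ f g hg hf
    constructor
    · rw [Nat.cast_zero, contDiffOn_zero]
      exact fun x hx =>
        ((hg x hx).continuousAt.comp_continuousWithinAt ((hf.1.continuousOn) x hx))
    · intro x hx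
      obtain ⟨K, t, ht, hK⟩ :=
        (show ContDiffAt ℝ 1 g (f x) by exact_mod_cast hg x hx).exists_lipschitzOnWith
      obtain ⟨u, hu, C, hC0⟩ := hf.2 x hx
      have hCf : HolderOnWith C α f u := holder_zero_iff.mp hC0
      have hpre : f ⁻¹' t ∈ nhdsWithin x s := (hf.1.continuousOn) x hx ht
      have hgH : HolderOnWith K 1 g t := (holderOnWith_one).mpr hK
      have hcomp := hgH.comp (hCf.mono Set.inter_subset_left)
        (fun a (ha : a ∈ u ∩ f ⁻¹' t) => ha.2)
      rw [one_mul] at hcomp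
      refine ⟨u ∩ f ⁻¹' t, Filter.inter_mem hu hpre, K * C ^ ((1 : NNReal) : ℝ), ?_⟩
      exact holder_zero_iff.mpr hcomp
  | succ n ih =>
    intro F G _ _ _ _ f g hg hf
    rw [holderRegOn_succ_iff hs] at hf ⊢
    obtain ⟨hdf, hfd⟩ := hf
    have hdiffg : ∀ x ∈ s, DifferentiableAt ℝ g (f x) := fun x hx =>
      (hg x hx).differentiableAt (by simp)
    refine ⟨fun x hx =>
      ((hdiffg x hx).comp x ((hdf x hx).differentiableAt (hs.mem_nhds hx))).differentiableWithinAt,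
      ?_⟩
    have hfn : HolderRegOn n α f s :=
      HolderRegOn.of_succ_aux hs hα n f ((holderRegOn_succ_iff hs).mpr ⟨hdf, hfd⟩)
    have h1 : HolderRegOn n α (fun x => fderiv ℝ g (f x)) s :=
      ih f (fderiv ℝ g)
        (fun x hx => (hg x hx).fderiv_right (by
          rw [show ((n + 1 + 1 : ℕ) : WithTop ℕ∞) = ((n+1 : ℕ) : WithTop ℕ∞) + 1 by norm_cast]))
        hfn
    have h2 := HolderRegOn.prodMk hs n h1 hfd
    have h3 := ih (fun x => (fderiv ℝ g (f x), fderiv ℝ f x))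
      (fun p : (F →L[ℝ] G) × (E →L[ℝ] F) => p.1.comp p.2)
      (fun x hx => (isBoundedBilinearMap_comp.contDiff.of_le le_top).contDiffAt) h2
    exact h3.congr' fun x hx =>
      (fderiv_comp x (hdiffg x hx) ((hdf x hx).differentiableAt (hs.mem_nhds hx))).symm

end HolderInfra2
/-! ### Geometry of graph submanifolds -/

section Geometry

open ContinuousLinearMap

variable {l m : ℕ}

local notation "EE" => EuclideanSpace ℝ (Fin l)
local notation "VV" => EuclideanSpace ℝ (Fin m)

/-- The identification `ℝˡ × ℝᵐ ≃ Amb` as a continuous linear map. -/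
def Jdown : (EuclideanSpace ℝ (Fin l) × EuclideanSpace ℝ (Fin m)) →L[ℝ] Amb l m :=
  ((WithLp.prodContinuousLinearEquiv 2 ℝ _ _).symm : _ ≃L[ℝ] Amb l m).toContinuousLinearMap

def Jup : Amb l m →L[ℝ] EuclideanSpace ℝ (Fin l) × EuclideanSpace ℝ (Fin m) :=
  ((WithLp.prodContinuousLinearEquiv 2 ℝ _ _) : Amb l m ≃L[ℝ] _).toContinuousLinearMap

def iota1 : EuclideanSpace ℝ (Fin l) →L[ℝ] Amb l m := Jdown.comp (ContinuousLinearMap.inl ℝ _ _)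
def iota2 : EuclideanSpace ℝ (Fin m) →L[ℝ] Amb l m := Jdown.comp (ContinuousLinearMap.inr ℝ _ _)
def piE : Amb l m →L[ℝ] EuclideanSpace ℝ (Fin l) := (ContinuousLinearMap.fst ℝ _ _).comp Jup
def piV : Amb l m →L[ℝ] EuclideanSpace ℝ (Fin m) := (ContinuousLinearMap.snd ℝ _ _).comp Jup

/-- `NN B : u ↦ (u, B u)`, the parametrization of the graph tangent space. -/
def NN (B : EuclideanSpace ℝ (Fin l) →L[ℝ] EuclideanSpace ℝ (Fin m)) :
    EuclideanSpace ℝ (Fin l) →L[ℝ] Amb l m :=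
  Jdown.comp ((ContinuousLinearMap.id ℝ _).prod B)

lemma inner_Jdown_Jdown (p q : EuclideanSpace ℝ (Fin l) × EuclideanSpace ℝ (Fin m)) :
    ⟪Jdown (l := l) (m := m) p, Jdown q⟫ = ⟪p.1, q.1⟫ + ⟪p.2, q.2⟫ := rfl

@[simp] lemma NN_apply (B : EE →L[ℝ] VV) (u : EE) : NN B u = Jdown (u, B u) := rfl

@[simp] lemma piE_Jdown (p : EE × VV) : piE (Jdown p) = p.1 := by
  simp [piE, Jdown, Jup]

@[simp] lemma piV_Jdown (p : EE × VV) : piV (Jdown p) = p.2 := by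
  simp [piV, Jdown, Jup]

@[simp] lemma iota1_apply (e : EE) : (iota1 (m := m)) e = Jdown (e, 0) := rfl
@[simp] lemma iota2_apply (b : VV) : (iota2 (l := l)) b = Jdown (0, b) := rfl

lemma inner_NN_NN (B : EE →L[ℝ] VV) (u u' : EE) :
    ⟪NN B u, NN B u'⟫ = ⟪u, u'⟫ + ⟪B u, B u'⟫ := rfl

lemma adj_NN_iota1_apply (B : EE →L[ℝ] VV) (e : EE) :
    ContinuousLinearMap.adjoint (NN B) (iota1 e) = e := by
  apply ext_inner_right ℝ
  intro u
  rw [ContinuousLinearMap.adjoint_inner_left, iota1_apply, NN_apply, inner_Jdown_Jdown]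
  simp

lemma adj_NN_iota2_apply (B : EE →L[ℝ] VV) (b : VV) :
    ContinuousLinearMap.adjoint (NN B) (iota2 b) = ContinuousLinearMap.adjoint B b := by
  apply ext_inner_right ℝ
  intro u
  rw [ContinuousLinearMap.adjoint_inner_left, ContinuousLinearMap.adjoint_inner_left,
    iota2_apply, NN_apply, inner_Jdown_Jdown]
  simp

/-- The "first fundamental form" operator `N* N = 1 + B* B`. -/
def SB (B : EuclideanSpace ℝ (Fin l) →L[ℝ] EuclideanSpace ℝ (Fin m)) :
    EuclideanSpace ℝ (Fin l) →L[ℝ] EuclideanSpace ℝ (Fin l) :=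
  (ContinuousLinearMap.adjoint (NN B)).comp (NN B)

lemma inner_SB (B : EE →L[ℝ] VV) (z u : EE) : ⟪SB B z, u⟫ = ⟪NN B z, NN B u⟫ := by
  rw [SB, ContinuousLinearMap.comp_apply, ContinuousLinearMap.adjoint_inner_left]

lemma SB_apply (B : EE →L[ℝ] VV) (z : EE) :
    SB B z = z + ContinuousLinearMap.adjoint B (B z) := by
  apply ext_inner_right ℝ
  intro u
  rw [inner_SB, inner_NN_NN, inner_add_left, ContinuousLinearMap.adjoint_inner_left]

lemma isUnit_SB (B : EE →L[ℝ] VV) : IsUnit (SB B) := by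
  rw [ContinuousLinearMap.isUnit_iff_bijective]
  have hinj : Function.Injective (SB B) := by
    have hker : ∀ z, SB B z = 0 → z = 0 := by
      intro z hz
      have h0 : ⟪SB B z, z⟫ = 0 := by rw [hz, inner_zero_left]
      rw [inner_SB, inner_NN_NN] at h0
      have h1 : ⟪z, z⟫ = 0 := le_antisymm
        (by nlinarith [real_inner_self_nonneg (x := B z)]) real_inner_self_nonneg
      exact inner_self_eq_zero.mp h1
    intro a b hab
    have : SB B (a - b) = 0 := by rw [map_sub, hab, sub_self]
    exact sub_eq_zero.mp (hker _ this)
  exact ⟨hinj, LinearMap.injective_iff_surjective.mp hinj⟩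

end Geometry
section Geometry2

open ContinuousLinearMap

variable {l m : ℕ}

local notation "EE" => EuclideanSpace ℝ (Fin l)
local notation "VV" => EuclideanSpace ℝ (Fin m)

lemma graphTangent_eq (F : EuclideanSpace ℝ (Fin l) → EuclideanSpace ℝ (Fin m))
    (x : EuclideanSpace ℝ (Fin l)) :
    graphTangent F x = LinearMap.range (NN (fderiv ℝ F x) : EE →ₗ[ℝ] Amb l m) := by
  apply Submodule.ext
  intro y
  constructor
  · rintro ⟨u, rfl⟩
    exact ⟨u, rfl⟩
  · rintro ⟨u, rfl⟩
    exact ⟨u, rfl⟩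

/-- The orthogonal projection onto the graph tangent space, as an explicit smooth formula. -/
def phi (B : EuclideanSpace ℝ (Fin l) →L[ℝ] EuclideanSpace ℝ (Fin m)) :
    Amb l m →L[ℝ] Amb l m :=
  ((NN B).comp (Ring.inverse (SB B))).comp (ContinuousLinearMap.adjoint (NN B))

lemma tangProj_eq (F : EuclideanSpace ℝ (Fin l) → EuclideanSpace ℝ (Fin m))
    (x : EuclideanSpace ℝ (Fin l)) : tangProj F x = phi (fderiv ℝ F x) := by
  set B := fderiv ℝ F x with hB
  ext v
  have hSinv : (SB B).comp (Ring.inverse (SB B)) = ContinuousLinearMap.id ℝ EE := by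
    rw [← ContinuousLinearMap.mul_def, Ring.mul_inverse_cancel _ (isUnit_SB B)]
    rfl
  set g := Ring.inverse (SB B) (ContinuousLinearMap.adjoint (NN B) v) with hg
  have hphi : phi B v = NN B g := rfl
  have hmem : phi B v ∈ graphTangent F x := by
    rw [graphTangent_eq, hphi]
    exact ⟨g, rfl⟩
  have hperp : v - phi B v ∈ (graphTangent F x)ᗮ := by
    rw [graphTangent_eq]
    rw [Submodule.mem_orthogonal]
    rintro w ⟨u, rfl⟩
    rw [inner_sub_right, hphi]
    have h1 : ⟪NN B u, NN B g⟫ = ⟪u, SB B g⟫ :=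
      calc ⟪NN B u, NN B g⟫ = ⟪NN B g, NN B u⟫ := real_inner_comm _ _
        _ = ⟪SB B g, u⟫ := (inner_SB B g u).symm
        _ = ⟪u, SB B g⟫ := real_inner_comm _ _
    have h2 : SB B g = ContinuousLinearMap.adjoint (NN B) v := by
      rw [hg, ← ContinuousLinearMap.comp_apply, hSinv]
      rfl
    change ⟪NN B u, v⟫ - ⟪NN B u, NN B g⟫ = 0
    rw [h1, h2, ContinuousLinearMap.adjoint_inner_right, sub_self]
  have := Submodule.eq_starProjection_of_mem_orthogonal (K := graphTangent F x) hmem hperp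
  show ((graphTangent F x).subtypeL.comp (Submodule.orthogonalProjection (graphTangent F x))) v = phi B v
  rw [ContinuousLinearMap.comp_apply, Submodule.subtypeL_apply]
  exact this

lemma normProj_eq (F : EuclideanSpace ℝ (Fin l) → EuclideanSpace ℝ (Fin m))
    (x : EuclideanSpace ℝ (Fin l)) :
    normProj F x = ContinuousLinearMap.id ℝ (Amb l m) - tangProj F x := by
  ext v
  show (((graphTangent F x)ᗮ).subtypeL.comp (Submodule.orthogonalProjection ((graphTangent F x)ᗮ))) v
    = (ContinuousLinearMap.id ℝ (Amb l m) - tangProj F x) v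
  rw [ContinuousLinearMap.comp_apply, Submodule.subtypeL_apply,
    Submodule.coe_orthogonalProjectionOnto_apply, Submodule.starProjection_orthogonal_val,
    ContinuousLinearMap.sub_apply]
  rfl

/-- Recovery of the differential from the tangent projection. -/
def psi (P : Amb l m →L[ℝ] Amb l m) :
    EuclideanSpace ℝ (Fin l) →L[ℝ] EuclideanSpace ℝ (Fin m) :=
  ((piV.comp (P.comp iota1))).comp (Ring.inverse (piE.comp (P.comp iota1)))

lemma piE_phi_iota1 (B : EE →L[ℝ] VV) :
    piE.comp ((phi B).comp iota1) = Ring.inverse (SB B) := by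
  ext u
  simp only [ContinuousLinearMap.comp_apply, phi]
  rw [adj_NN_iota1_apply, NN_apply, piE_Jdown]

lemma piV_phi_iota1 (B : EE →L[ℝ] VV) :
    piV.comp ((phi B).comp iota1) = B.comp (Ring.inverse (SB B)) := by
  ext u
  simp only [ContinuousLinearMap.comp_apply, phi]
  rw [adj_NN_iota1_apply, NN_apply, piV_Jdown]

lemma ringInverse_ringInverse_SB (B : EE →L[ℝ] VV) :
    Ring.inverse (Ring.inverse (SB B)) = SB B := by
  have h := isUnit_SB B
  rw [← h.unit_spec, Ring.inverse_unit, Ring.inverse_unit, inv_inv]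

lemma psi_tangProj (F : EuclideanSpace ℝ (Fin l) → EuclideanSpace ℝ (Fin m))
    (x : EuclideanSpace ℝ (Fin l)) : psi (tangProj F x) = fderiv ℝ F x := by
  set B := fderiv ℝ F x with hB
  rw [tangProj_eq]
  show (piV.comp ((phi B).comp iota1)).comp (Ring.inverse (piE.comp ((phi B).comp iota1))) = B
  rw [piE_phi_iota1, piV_phi_iota1, ringInverse_ringInverse_SB]
  ext u
  simp only [ContinuousLinearMap.comp_apply]
  rw [← ContinuousLinearMap.comp_apply (Ring.inverse (SB B)) (SB B),
    ← ContinuousLinearMap.mul_def, Ring.inverse_mul_cancel _ (isUnit_SB B)]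
  rfl

lemma toAmb_eq_iota2 (b : VV) : toAmb (0 : EE) b = iota2 b := by
  rw [iota2_apply]
  rfl

lemma secondFF_eq (F : EuclideanSpace ℝ (Fin l) → EuclideanSpace ℝ (Fin m))
    (x v w : EuclideanSpace ℝ (Fin l)) :
    secondFF F x v w = iota2 (fderiv ℝ (fderiv ℝ F) x v w)
      - tangProj F x (iota2 (fderiv ℝ (fderiv ℝ F) x v w)) := by
  rw [secondFF, toAmb_eq_iota2, Submodule.coe_orthogonalProjectionOnto_apply,
    Submodule.starProjection_orthogonal_val]
  rfl

/-- Pointwise recovery of the second derivative from the second fundamental form. -/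
lemma fderiv2_recover (F : EuclideanSpace ℝ (Fin l) → EuclideanSpace ℝ (Fin m))
    (x v w : EuclideanSpace ℝ (Fin l)) :
    fderiv ℝ (fderiv ℝ F) x v w =
      (ContinuousLinearMap.id ℝ VV
          + (fderiv ℝ F x).comp (ContinuousLinearMap.adjoint (fderiv ℝ F x)))
        (piV (secondFF F x v w)) := by
  set B := fderiv ℝ F x with hB
  set b := fderiv ℝ (fderiv ℝ F) x v w with hb
  rw [secondFF_eq, tangProj_eq]
  set y := ContinuousLinearMap.adjoint (NN B) (iota2 b) with hy'
  have hy : y = ContinuousLinearMap.adjoint B b := adj_NN_iota2_apply B b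
  set g := Ring.inverse (SB B) y with hg
  have hphi : phi B (iota2 b) = NN B g := rfl
  have hSg : SB B g = y := by
    rw [hg, ← ContinuousLinearMap.comp_apply, ← ContinuousLinearMap.mul_def,
      Ring.mul_inverse_cancel _ (isUnit_SB B)]
    rfl
  have hBg : ContinuousLinearMap.adjoint B (B g) = y - g := by
    have h1 := SB_apply B g
    rw [hSg] at h1
    rw [h1]
    abel
  have hpi : piV (iota2 b - phi B (iota2 b)) = b - B g := by
    rw [hphi, map_sub, iota2_apply, piV_Jdown, NN_apply, piV_Jdown]
  rw [hpi]
  rw [ContinuousLinearMap.add_apply, ContinuousLinearMap.comp_apply,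
    ContinuousLinearMap.id_apply, map_sub, map_sub, ← hy, hBg, map_sub]
  abel

end Geometry2
/-! ### Smoothness of the algebraic operations -/

section Adj

variable {X Y : Type} [NormedAddCommGroup X] [InnerProductSpace ℝ X] [NormedAddCommGroup Y]
  [InnerProductSpace ℝ Y] [FiniteDimensional ℝ X] [FiniteDimensional ℝ Y]

def adjL : (X →L[ℝ] Y) →ₗ[ℝ] (Y →L[ℝ] X) where
  toFun := ContinuousLinearMap.adjoint
  map_add' a b := map_add _ a b
  map_smul' r a := by simp

lemma contDiff_adjoint {n : WithTop ℕ∞} :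
    ContDiff ℝ n (fun T : X →L[ℝ] Y => ContinuousLinearMap.adjoint T) := by
  have h : (fun T : X →L[ℝ] Y => ContinuousLinearMap.adjoint T)
      = ⇑(LinearMap.toContinuousLinearMap (adjL (X := X) (Y := Y))) := rfl
  rw [h]
  exact (LinearMap.toContinuousLinearMap (adjL (X := X) (Y := Y))).contDiff

end Adj

section Geometry3

open ContinuousLinearMap

variable {l m : ℕ}

local notation "EE" => EuclideanSpace ℝ (Fin l)
local notation "VV" => EuclideanSpace ℝ (Fin m)

lemma contDiff_NN {n : WithTop ℕ∞} : ContDiff ℝ n (fun B : EE →L[ℝ] VV => NN B) := by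
  have h2 : (fun B : EE →L[ℝ] VV => NN B)
      = fun B => Jdown.comp ((ContinuousLinearMap.inl ℝ EE VV)
          + (ContinuousLinearMap.inr ℝ EE VV).comp B) := by
    funext B
    ext u
    show Jdown ((u, B u) : _ × _) = Jdown (u, 0) + Jdown (0, B u)
    rw [← map_add, Prod.mk_add_mk, add_zero, zero_add]
  rw [h2]
  exact contDiff_const.clm_comp (contDiff_const.add (contDiff_const.clm_comp contDiff_id))

lemma contDiff_SB {n : WithTop ℕ∞} : ContDiff ℝ n (fun B : EE →L[ℝ] VV => SB B) :=
  (contDiff_adjoint.comp contDiff_NN).clm_comp contDiff_NN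

lemma contDiffAt_phi {n : WithTop ℕ∞} (B₀ : EE →L[ℝ] VV) :
    ContDiffAt ℝ n (fun B : EE →L[ℝ] VV => phi B) B₀ := by
  have hinv : ContDiffAt ℝ n (fun B : EE →L[ℝ] VV => Ring.inverse (SB B)) B₀ := by
    have h := contDiffAt_ringInverse ℝ (n := n) (R := EE →L[ℝ] EE) (isUnit_SB B₀).unit
    rw [IsUnit.unit_spec] at h
    exact h.comp B₀ contDiff_SB.contDiffAt
  exact (contDiff_NN.contDiffAt.clm_comp hinv).clm_comp
    ((contDiff_adjoint.comp contDiff_NN).contDiffAt)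

lemma contDiffAt_psi {n : WithTop ℕ∞} {P₀ : Amb l m →L[ℝ] Amb l m}
    (h : IsUnit (piE.comp (P₀.comp iota1))) : ContDiffAt ℝ n (psi (l := l) (m := m)) P₀ := by
  have hlin : ContDiff ℝ n (fun P : Amb l m →L[ℝ] Amb l m => piE.comp (P.comp iota1)) :=
    contDiff_const.clm_comp (contDiff_id.clm_comp contDiff_const)
  have hlin2 : ContDiff ℝ n (fun P : Amb l m →L[ℝ] Amb l m => piV.comp (P.comp iota1)) :=
    contDiff_const.clm_comp (contDiff_id.clm_comp contDiff_const)
  have hinv : ContDiffAt ℝ n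
      (fun P : Amb l m →L[ℝ] Amb l m => Ring.inverse (piE.comp (P.comp iota1))) P₀ := by
    have h2 := contDiffAt_ringInverse ℝ (n := n) (R := EE →L[ℝ] EE) h.unit
    rw [IsUnit.unit_spec] at h2
    exact h2.comp P₀ hlin.contDiffAt
  exact hlin2.contDiffAt.clm_comp hinv

lemma isUnit_piE_tangProj (F : EuclideanSpace ℝ (Fin l) → EuclideanSpace ℝ (Fin m))
    (x : EuclideanSpace ℝ (Fin l)) : IsUnit (piE.comp ((tangProj F x).comp iota1)) := by
  rw [tangProj_eq, piE_phi_iota1, ← (isUnit_SB (fderiv ℝ F x)).unit_spec, Ring.inverse_unit]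
  exact Units.isUnit _

lemma euclid_sum_single (u : EuclideanSpace ℝ (Fin l)) :
    ∑ i, u i • EuclideanSpace.single i (1 : ℝ) = u := by
  have h := (EuclideanSpace.basisFun (Fin l) ℝ).sum_repr u
  simpa [EuclideanSpace.basisFun_repr, EuclideanSpace.basisFun_apply] using h

def kappa (i j : Fin l) : VV →L[ℝ] (EE →L[ℝ] (EE →L[ℝ] VV)) :=
  (ContinuousLinearMap.smulRightL ℝ EE (EE →L[ℝ] VV) (EuclideanSpace.proj i)).comp
    (ContinuousLinearMap.smulRightL ℝ EE VV (EuclideanSpace.proj j))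

lemma kappa_apply (i j : Fin l) (c : VV) (u u' : EE) :
    kappa i j c u u' = u i • u' j • c := rfl

lemma clm_expand (T : EE →L[ℝ] (EE →L[ℝ] VV)) :
    ∑ i, ∑ j, kappa i j (T (EuclideanSpace.single i 1) (EuclideanSpace.single j 1)) = T := by
  apply ContinuousLinearMap.ext
  intro u
  apply ContinuousLinearMap.ext
  intro u'
  have hL : (∑ i, ∑ j,
      kappa i j (T (EuclideanSpace.single i 1) (EuclideanSpace.single j 1))) u u'
      = ∑ i, ∑ j, u i • u' j •
          T (EuclideanSpace.single i (1 : ℝ)) (EuclideanSpace.single j (1 : ℝ)) := by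
    rw [ContinuousLinearMap.sum_apply, ContinuousLinearMap.sum_apply]
    refine Finset.sum_congr rfl fun i _ => ?_
    rw [ContinuousLinearMap.sum_apply, ContinuousLinearMap.sum_apply]
    exact Finset.sum_congr rfl fun j _ => rfl
  rw [hL]
  have hR : T u u' = ∑ i, ∑ j, u i • u' j •
      T (EuclideanSpace.single i (1 : ℝ)) (EuclideanSpace.single j (1 : ℝ)) := by
    conv_lhs => rw [← euclid_sum_single u]
    rw [map_sum, ContinuousLinearMap.sum_apply]
    refine Finset.sum_congr rfl fun i _ => ?_
    rw [map_smul, ContinuousLinearMap.smul_apply, ← Finset.smul_sum]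
    congr 1
    conv_lhs => rw [← euclid_sum_single u']
    rw [map_sum]
    exact Finset.sum_congr rfl fun j _ => map_smul _ _ _
  rw [← hR]

end Geometry3
/-! ### The main theorem -/

set_option maxHeartbeats 1000000 in
open ContinuousLinearMap in
/-- For a `C^{k,α}` graph submanifold `L = graph F` of Euclidean space (`k ≥ 1`,
`0 ≤ α ≤ 1`), the following are equivalent: (1) `L` is `C^{k+1,α}`; (2) the tangent
bundle of `L` is `C^{k,α}`; (3) the normal bundle of `L` is `C^{k,α}`; (4) the second
fundamental form of `L` exists and is `C^{k-1,α}`. -/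
theorem stmt11 {l m : ℕ} (k : ℕ) (hk : 1 ≤ k) (α : NNReal) (hα : α ≤ 1)
    (O : Set (EuclideanSpace ℝ (Fin l))) (hO : IsOpen O)
    (F : EuclideanSpace ℝ (Fin l) → EuclideanSpace ℝ (Fin m))
    (hF : HolderRegOn k α F O) :
    List.TFAE
      [ HolderRegOn (k + 1) α F O,
        HolderRegOn k α (fun x => tangProj F x) O,
        HolderRegOn k α (fun x => normProj F x) O,
        (∀ x ∈ O, DifferentiableAt ℝ (fderiv ℝ F) x) ∧
          ∀ v w : EuclideanSpace ℝ (Fin l),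
            HolderRegOn (k - 1) α (fun x => secondFF F x v w) O ] := by
  obtain ⟨j, rfl⟩ : ∃ j, k = j + 1 := ⟨k - 1, by omega⟩
  simp only [Nat.add_sub_cancel]
  have hdiffF : DifferentiableOn ℝ F O :=
    hF.1.differentiableOn (by simp)
  have hA : HolderRegOn j α (fderiv ℝ F) O := ((holderRegOn_succ_iff hO).mp hF).2
  have imp12 : HolderRegOn (j + 1 + 1) α F O →
      HolderRegOn (j + 1) α (fun x => tangProj F x) O := by
    intro h1
    have hAk : HolderRegOn (j + 1) α (fderiv ℝ F) O := ((holderRegOn_succ_iff hO).mp h1).2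
    have h := HolderRegOn.comp_smooth hO hα (j + 1) (fderiv ℝ F) phi
      (fun x hx => contDiffAt_phi _) hAk
    exact h.congr' fun x hx => (tangProj_eq F x).symm
  have imp21 : HolderRegOn (j + 1) α (fun x => tangProj F x) O →
      HolderRegOn (j + 1 + 1) α F O := by
    intro h2
    have h := HolderRegOn.comp_smooth hO hα (j + 1) (fun x => tangProj F x) psi
      (fun x hx => contDiffAt_psi (isUnit_piE_tangProj F x)) h2
    have hA' : HolderRegOn (j + 1) α (fderiv ℝ F) O :=
      h.congr' fun x hx => psi_tangProj F x
    exact (holderRegOn_succ_iff hO).mpr ⟨hdiffF, hA'⟩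
  have imp23 : HolderRegOn (j + 1) α (fun x => tangProj F x) O →
      HolderRegOn (j + 1) α (fun x => normProj F x) O := by
    intro h2
    have h := HolderRegOn.comp_smooth hO hα (j + 1) (fun x => tangProj F x)
      (fun P => ContinuousLinearMap.id ℝ (Amb l m) - P)
      (fun x hx => (contDiff_const.sub contDiff_id).contDiffAt) h2
    exact h.congr' fun x hx => (normProj_eq F x).symm
  have imp32 : HolderRegOn (j + 1) α (fun x => normProj F x) O →
      HolderRegOn (j + 1) α (fun x => tangProj F x) O := by
    intro h3
    have h := HolderRegOn.comp_smooth hO hα (j + 1) (fun x => normProj F x)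
      (fun P => ContinuousLinearMap.id ℝ (Amb l m) - P)
      (fun x hx => (contDiff_const.sub contDiff_id).contDiffAt) h3
    refine h.congr' fun x hx => ?_
    show ContinuousLinearMap.id ℝ (Amb l m) - normProj F x = tangProj F x
    rw [normProj_eq]
    exact sub_sub_cancel _ _
  have imp14 : HolderRegOn (j + 1 + 1) α F O →
      (∀ x ∈ O, DifferentiableAt ℝ (fderiv ℝ F) x) ∧
        ∀ v w : EuclideanSpace ℝ (Fin l),
          HolderRegOn j α (fun x => secondFF F x v w) O := by
    intro h1
    have hAk : HolderRegOn (j + 1) α (fderiv ℝ F) O := ((holderRegOn_succ_iff hO).mp h1).2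
    have hB : HolderRegOn j α (fderiv ℝ (fderiv ℝ F)) O :=
      ((holderRegOn_succ_iff hO).mp hAk).2
    have hdA : DifferentiableOn ℝ (fderiv ℝ F) O := ((holderRegOn_succ_iff hO).mp hAk).1
    refine ⟨fun x hx => (hdA x hx).differentiableAt (hO.mem_nhds hx), ?_⟩
    intro v w
    have h3j : HolderRegOn j α (fun x => normProj F x) O :=
      HolderRegOn.mono_order hO hα (imp23 (imp12 h1)) (Nat.le_succ j)
    have hpair := HolderRegOn.prodMk hO j h3j hB
    have hχ : ContDiff ℝ (j + 1 : ℕ)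
        (fun p : (Amb l m →L[ℝ] Amb l m) ×
            (EuclideanSpace ℝ (Fin l) →L[ℝ]
              (EuclideanSpace ℝ (Fin l) →L[ℝ] EuclideanSpace ℝ (Fin m))) =>
          p.1 (iota2 (p.2 v w))) :=
      contDiff_fst.clm_apply ((ContinuousLinearMap.contDiff iota2).comp
        ((contDiff_snd.clm_apply contDiff_const).clm_apply contDiff_const))
    have h := HolderRegOn.comp_smooth hO hα j
      (fun x => ((fun x => normProj F x) x, fderiv ℝ (fderiv ℝ F) x))
      (fun p => p.1 (iota2 (p.2 v w))) (fun x hx => hχ.contDiffAt) hpair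
    refine h.congr' fun x hx => ?_
    show normProj F x (iota2 (fderiv ℝ (fderiv ℝ F) x v w)) = secondFF F x v w
    rw [normProj_eq, ContinuousLinearMap.sub_apply, ContinuousLinearMap.id_apply, secondFF_eq]
  have imp41 : ((∀ x ∈ O, DifferentiableAt ℝ (fderiv ℝ F) x) ∧
        ∀ v w : EuclideanSpace ℝ (Fin l),
          HolderRegOn j α (fun x => secondFF F x v w) O) →
      HolderRegOn (j + 1 + 1) α F O := by
    rintro ⟨hd2, hsff⟩
    have hslice : ∀ v w : EuclideanSpace ℝ (Fin l),
        HolderRegOn j α (fun x => fderiv ℝ (fderiv ℝ F) x v w) O := by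
      intro v w
      have hpair := HolderRegOn.prodMk hO j hA (hsff v w)
      have hρ : ContDiff ℝ (j + 1 : ℕ)
          (fun p : (EuclideanSpace ℝ (Fin l) →L[ℝ] EuclideanSpace ℝ (Fin m)) × Amb l m =>
            (ContinuousLinearMap.id ℝ (EuclideanSpace ℝ (Fin m))
                + p.1.comp (ContinuousLinearMap.adjoint p.1)) (piV p.2)) :=
        (contDiff_const.add (contDiff_fst.clm_comp
          (contDiff_adjoint.comp contDiff_fst))).clm_apply
          ((ContinuousLinearMap.contDiff piV).comp contDiff_snd)
      have h := HolderRegOn.comp_smooth hO hα j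
        (fun x => (fderiv ℝ F x, (fun x => secondFF F x v w) x))
        (fun p => (ContinuousLinearMap.id ℝ (EuclideanSpace ℝ (Fin m))
            + p.1.comp (ContinuousLinearMap.adjoint p.1)) (piV p.2))
        (fun x hx => hρ.contDiffAt) hpair
      exact h.congr' fun x hx => (fderiv2_recover F x v w).symm
    have hT : HolderRegOn j α (fun x => fderiv ℝ (fderiv ℝ F) x) O := by
      have hleaf : ∀ i j' : Fin l, HolderRegOn j α
          (fun x => kappa i j' (fderiv ℝ (fderiv ℝ F) x
            (EuclideanSpace.single i 1) (EuclideanSpace.single j' 1))) O := fun i j' =>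
        @HolderRegOn.clm_comp_left (EuclideanSpace ℝ (Fin l)) _ _
          (EuclideanSpace ℝ (Fin m)) _ _
          (EuclideanSpace ℝ (Fin l) →L[ℝ]
            (EuclideanSpace ℝ (Fin l) →L[ℝ] EuclideanSpace ℝ (Fin m)))
          _ _ O j α hO
          (fun x => fderiv ℝ (fderiv ℝ F) x
            (EuclideanSpace.single i 1) (EuclideanSpace.single j' 1))
          (kappa i j')
          (hslice (EuclideanSpace.single i 1) (EuclideanSpace.single j' 1))
      have hsum := holderRegOn_finset_sum hO Finset.univ
        (fun i x => ∑ j', kappa i j' (fderiv ℝ (fderiv ℝ F) x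
          (EuclideanSpace.single i 1) (EuclideanSpace.single j' 1)))
        (fun i _ => holderRegOn_finset_sum hO Finset.univ
          (fun j' x => kappa i j' (fderiv ℝ (fderiv ℝ F) x
            (EuclideanSpace.single i 1) (EuclideanSpace.single j' 1)))
          (fun j' _ => hleaf i j'))
      exact hsum.congr' fun x hx => clm_expand _
    have hA1 : HolderRegOn (j + 1) α (fderiv ℝ F) O := (holderRegOn_succ_iff hO).mpr
      ⟨fun x hx => (hd2 x hx).differentiableWithinAt, hT⟩
    exact (holderRegOn_succ_iff hO).mpr ⟨hdiffF, hA1⟩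
  tfae_have 1 → 2 := imp12
  tfae_have 2 → 1 := imp21
  tfae_have 2 → 3 := imp23
  tfae_have 3 → 2 := imp32
  tfae_have 1 → 4 := imp14
  tfae_have 4 → 1 := imp41
  tfae_finish
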